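/- arXiv:2303.09873 — 5 statements merged into one kernel-verified Lean document; each statement's English description precedes it below -/
import Mathlib

section
/- The symmetric group cloning maps satisfy the cloning system product rule: for all σ, τ ∈ Σ_n and 1 ≤ j ≤ n, c_j^n(σ·τ) = c_{τ(j)}^n(σ) · c_j^n(τ), where · denotes composition of permutations (functional convention: (σ·τ)(i) = σ(τ(i))). -/
/-- The cloning map `c_j^n` on functions `Fin n → Fin n`: duplicate the `j`-th strand
(0-based version of the 1-based formula in the paper). -/
def cloneFun {n : ℕ} (f : Fin n → Fin n) (j : Fin n) (i : Fin (n+1)) : Fin (n+1) :=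
  if h1 : (i : ℕ) ≤ (j : ℕ) then
    let k : Fin n := ⟨(i : ℕ), lt_of_le_of_lt h1 j.isLt⟩
    if (f k : ℕ) ≤ (f j : ℕ) then ⟨(f k : ℕ), Nat.lt_succ_of_lt (f k).isLt⟩
    else ⟨(f k : ℕ) + 1, Nat.succ_lt_succ (f k).isLt⟩
  else
    let k : Fin n := ⟨(i : ℕ) - 1, by have := i.isLt; have := j.isLt; omega⟩
    if (f k : ℕ) < (f j : ℕ) then ⟨(f k : ℕ), Nat.lt_succ_of_lt (f k).isLt⟩
    else ⟨(f k : ℕ) + 1, Nat.succ_lt_succ (f k).isLt⟩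

/-- The map `λ_n` on functions: extend by fixing the last element. -/
def lamFun {n : ℕ} (f : Fin n → Fin n) (i : Fin (n+1)) : Fin (n+1) :=
  if h : (i : ℕ) < n then ⟨(f ⟨(i : ℕ), h⟩ : ℕ), Nat.lt_succ_of_lt (f ⟨(i : ℕ), h⟩).isLt⟩ else i

/-- The map `ρ_n` on functions: extend by fixing the first element. -/
def rhoFun {n : ℕ} (f : Fin n → Fin n) (i : Fin (n+1)) : Fin (n+1) :=
  if h : (i : ℕ) = 0 then ⟨0, Nat.succ_pos n⟩
  else
    let k : Fin n := ⟨(i : ℕ) - 1, by have := i.isLt; omega⟩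
    ⟨(f k : ℕ) + 1, Nat.succ_lt_succ (f k).isLt⟩

lemma cloneFun_val_le {n : ℕ} (f : Fin n → Fin n) (j : Fin n) (i : Fin (n+1))
    (h1 : (i : ℕ) ≤ (j : ℕ)) (k : Fin n) (hk : (k : ℕ) = (i : ℕ)) :
    (cloneFun f j i : ℕ) = if (f k : ℕ) ≤ (f j : ℕ) then (f k : ℕ) else (f k : ℕ) + 1 := by
  have hke : k = ⟨(i : ℕ), lt_of_le_of_lt h1 j.isLt⟩ := Fin.ext hk
  rw [hke]
  simp only [cloneFun, dif_pos h1]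
  exact apply_ite Fin.val _ _ _

lemma cloneFun_val_gt {n : ℕ} (f : Fin n → Fin n) (j : Fin n) (i : Fin (n+1))
    (h1 : ¬ (i : ℕ) ≤ (j : ℕ)) (k : Fin n) (hk : (k : ℕ) = (i : ℕ) - 1) :
    (cloneFun f j i : ℕ) = if (f k : ℕ) < (f j : ℕ) then (f k : ℕ) else (f k : ℕ) + 1 := by
  have hke : k = ⟨(i : ℕ) - 1, by have := i.isLt; have := j.isLt; omega⟩ := Fin.ext hk
  rw [hke]
  simp only [cloneFun, dif_neg h1]
  exact apply_ite Fin.val _ _ _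

/-- The cloning system product rule for symmetric groups:
`c_j^n(σ·τ) = c_{τ(j)}^n(σ) · c_j^n(τ)` (functional convention). -/
theorem stmt1 {n : ℕ} (σ τ : Equiv.Perm (Fin n)) (j : Fin n) :
    cloneFun ⇑(σ * τ) j = cloneFun ⇑σ (τ j) ∘ cloneFun ⇑τ j := by
  funext i
  apply Fin.ext
  simp only [Function.comp_apply]
  have hinj : ∀ a b : Fin n, (τ a : ℕ) = (τ b : ℕ) → a = b := fun a b h => τ.injective (Fin.ext h)
  by_cases h1 : (i : ℕ) ≤ (j : ℕ)
  · set k : Fin n := ⟨(i : ℕ), lt_of_le_of_lt h1 j.isLt⟩ with hk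
    have lhs := cloneFun_val_le ⇑(σ * τ) j i h1 k rfl
    have mid := cloneFun_val_le ⇑τ j i h1 k rfl
    rw [lhs]
    simp only [Equiv.Perm.mul_apply]
    by_cases h2 : (τ k : ℕ) ≤ (τ j : ℕ)
    · rw [if_pos h2] at mid
      rw [cloneFun_val_le ⇑σ (τ j) (cloneFun ⇑τ j i) (by omega) (τ k) mid.symm]
      congr 1
    · rw [if_neg h2] at mid
      rw [cloneFun_val_gt ⇑σ (τ j) (cloneFun ⇑τ j i) (by omega) (τ k) (by omega)]
      have hne : k ≠ j := by intro h; rw [h] at h2; omega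
      have hσne : (σ (τ k) : ℕ) ≠ (σ (τ j) : ℕ) := fun h =>
        hne (hinj _ _ (congrArg Fin.val (σ.injective (Fin.ext h))))
      by_cases h3 : (σ (τ k) : ℕ) < σ (τ j) <;> by_cases h4 : (σ (τ k) : ℕ) ≤ σ (τ j) <;> simp only [h3, h4, if_true, if_false] <;> omega
  · set k : Fin n := ⟨(i : ℕ) - 1, by have := i.isLt; have := j.isLt; omega⟩ with hk
    have lhs := cloneFun_val_gt ⇑(σ * τ) j i h1 k rfl
    have mid := cloneFun_val_gt ⇑τ j i h1 k rfl
    rw [lhs]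
    simp only [Equiv.Perm.mul_apply]
    by_cases h2 : (τ k : ℕ) < (τ j : ℕ)
    · rw [if_pos h2] at mid
      rw [cloneFun_val_le ⇑σ (τ j) (cloneFun ⇑τ j i) (by omega) (τ k) mid.symm]
      have hne : k ≠ j := by intro h; rw [h] at h2; omega
      have hσne : (σ (τ k) : ℕ) ≠ (σ (τ j) : ℕ) := fun h =>
        hne (hinj _ _ (congrArg Fin.val (σ.injective (Fin.ext h))))
      by_cases h3 : (σ (τ k) : ℕ) < σ (τ j) <;> by_cases h4 : (σ (τ k) : ℕ) ≤ σ (τ j) <;> simp only [h3, h4, if_true, if_false] <;> omega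
    · rw [if_neg h2] at mid
      rw [cloneFun_val_gt ⇑σ (τ j) (cloneFun ⇑τ j i) (by omega) (τ k) (by omega)]
      congr 1
end

section
/- The symmetric group cloning maps satisfy: for all n ≥ 1, all l < j ≤ n, and all σ ∈ Σ_n, c_{j+1}^{n+1}(c_l^n(σ)) = c_l^{n+1}(c_j^n(σ)). -/
/-! Reading the values of `f : Fin n → Fin n` as natural numbers turns `cloneFun f j` into
`cloneNat F j` on sequences `F : ℕ → ℕ`, where no bounds have to be carried along. On sequences
the identity holds pointwise for any `F`: once the position of `i` relative to `l` and `j` is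
fixed, both sides are nested comparisons of values of `F`, settled by linear arithmetic. -/

def cloneNat (F : ℕ → ℕ) (j i : ℕ) : ℕ :=
  if i ≤ j then (if F i ≤ F j then F i else F i + 1)
  else (if F (i - 1) < F j then F (i - 1) else F (i - 1) + 1)

theorem val_cloneFun {n : ℕ} {f : Fin n → Fin n} {F : ℕ → ℕ}
    (hF : ∀ i : Fin n, (f i : ℕ) = F i) (j : Fin n) (i : Fin (n + 1)) :
    (cloneFun f j i : ℕ) = cloneNat F j i := by
  obtain ⟨i, hi⟩ := i
  simp only [cloneFun, cloneNat]
  by_cases hij : i ≤ j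
  · rw [dif_pos hij, if_pos hij, ← hF ⟨i, by omega⟩, ← hF j]
    split_ifs <;> rfl
  · rw [dif_neg hij, if_neg hij, ← hF ⟨i - 1, by omega⟩, ← hF j]
    split_ifs <;> rfl

theorem cloneNat_cloneNat_of_lt (F : ℕ → ℕ) {l j : ℕ} (h : l < j) (i : ℕ) :
    cloneNat (cloneNat F l) (j + 1) i = cloneNat (cloneNat F j) l i := by
  rcases le_or_gt i l with hil | hli
  · simp only [cloneNat, if_pos hil, if_pos h.le, if_pos (by omega : i ≤ j),
      if_pos (by omega : i ≤ j + 1), Nat.add_sub_cancel]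
    split_ifs <;> omega
  rcases le_or_gt i (j + 1) with hij | hji
  · simp only [cloneNat, if_pos hij, if_neg (by omega : ¬i ≤ l), if_pos (by omega : i - 1 ≤ j),
      if_pos h.le, Nat.add_sub_cancel]
    split_ifs <;> omega
  · simp only [cloneNat, if_neg (by omega : ¬i ≤ j + 1), if_neg (by omega : ¬i ≤ l),
      if_neg (by omega : ¬i - 1 ≤ l), if_neg (by omega : ¬i - 1 ≤ j), if_pos h.le, Nat.add_sub_cancel]
    split_ifs <;> omega

theorem cloneFun_cloneFun_of_lt {n : ℕ} (f : Fin n → Fin n) {l j : Fin n} (h : (l : ℕ) < j) :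
    cloneFun (cloneFun f l) ⟨(j : ℕ) + 1, by omega⟩ =
      cloneFun (cloneFun f j) ⟨(l : ℕ), by omega⟩ := by
  let F : ℕ → ℕ := fun m => if hm : m < n then f ⟨m, hm⟩ else 0
  have hF : ∀ i : Fin n, (f i : ℕ) = F i := fun i => by simp [F]
  funext i
  apply Fin.ext
  rw [val_cloneFun (val_cloneFun hF l), val_cloneFun (val_cloneFun hF j)]
  exact cloneNat_cloneNat_of_lt F h i

/-- `c_{j+1}^{n+1}(c_l^n(σ)) = c_l^{n+1}(c_j^n(σ))` for `l < j`. -/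
theorem stmt2 {n : ℕ} (σ : Equiv.Perm (Fin n)) (l j : Fin n) (h : (l : ℕ) < (j : ℕ)) :
    cloneFun (cloneFun ⇑σ l) ⟨(j : ℕ) + 1, by have := j.isLt; omega⟩ =
      cloneFun (cloneFun ⇑σ j) ⟨(l : ℕ), by have := l.isLt; omega⟩ :=
  cloneFun_cloneFun_of_lt σ h
end

section
/- Every action operad gives rise to a cloning system: given an action operad (G_•, π, {∘_i}, id), defining ι_n(g) = e_2 ∘_1 g and κ_j^n(g) = g ∘_j e_2, the quadruple (G_•, ι, κ, π) satisfies all five cloning system axioms: (i) π∘ι = λ∘π, (ii) π∘κ_j = c_j∘π, (iii) ι∘κ_j = κ_j∘ι, (iv) κ_l ∘ κ_j = κ_{j+1} ∘ κ_l for l < j, and (v) κ_j(g·h) = κ_{π(h)(j)}(g)·κ_j(h). -/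
/-- Block insertion for (underlying functions of) permutations: `f ∘_i g`, where the
`i`-th strand of `f : Fin (n+1) → Fin (n+1)` is replaced by the block `g`. -/
def blockComp {n m : ℕ} (f : Fin (n+1) → Fin (n+1)) (i : Fin (n+1))
    (g : Fin (m+1) → Fin (m+1)) (k : Fin (n+m+1)) : Fin (n+m+1) :=
  if h1 : (k : ℕ) < (i : ℕ) then
    let b : Fin (n+1) := ⟨(k : ℕ), by have := i.isLt; omega⟩
    ⟨(f b : ℕ) + (if (f i : ℕ) < (f b : ℕ) then m else 0),
      by have := (f b).isLt; split <;> omega⟩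
  else if h2 : (k : ℕ) ≤ (i : ℕ) + m then
    let r : Fin (m+1) := ⟨(k : ℕ) - (i : ℕ), by omega⟩
    ⟨(f i : ℕ) + (g r : ℕ), by have := (f i).isLt; have := (g r).isLt; omega⟩
  else
    let b : Fin (n+1) := ⟨(k : ℕ) - m, by have := k.isLt; omega⟩
    ⟨(f b : ℕ) + (if (f i : ℕ) < (f b : ℕ) then m else 0),
      by have := (f b).isLt; split <;> omega⟩

/-- An action operad (without constants): a family of groups `G_{n+1}` (`n ≥ 0`) forming a
non-symmetric operad in sets, with an operad map `π` to the symmetric groups which is a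
levelwise group homomorphism, satisfying the compatibility of partial compositions with the
group multiplications. -/
structure ActionOperad where
  G : ℕ → GrpCat
  comp : ∀ {n m : ℕ}, G (n+1) → Fin (n+1) → G (m+1) → G (n+m+1)
  unitE : G 1
  pi : ∀ {n : ℕ}, G (n+1) →* Equiv.Perm (Fin (n+1))
  comp_unit : ∀ {n : ℕ} (f : G (n+1)) (i : Fin (n+1)), comp f i unitE = f
  unit_comp : ∀ {m : ℕ} (g : G (m+1)), HEq (comp unitE ⟨0, by omega⟩ g) g
  assoc_lt : ∀ {n m l : ℕ} (f : G (n+1)) (g : G (m+1)) (h : G (l+1)) (i : Fin (n+1))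
    (j : Fin (n+m+1)) (hj : (j : ℕ) < (i : ℕ)),
    HEq (comp (comp f i g) j h)
      (comp (comp f ⟨(j : ℕ), by have := i.isLt; omega⟩ h)
        ⟨(i : ℕ) + l, by have := i.isLt; omega⟩ g)
  assoc_ge : ∀ {n m l : ℕ} (f : G (n+1)) (g : G (m+1)) (h : G (l+1)) (i : Fin (n+1))
    (j : Fin (n+m+1)) (hj : (i : ℕ) + m < (j : ℕ)),
    HEq (comp (comp f i g) j h)
      (comp (comp f ⟨(j : ℕ) - m, by have := j.isLt; omega⟩ h)
        ⟨(i : ℕ), by have := i.isLt; omega⟩ g)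
  assoc_nest : ∀ {n m l : ℕ} (f : G (n+1)) (g : G (m+1)) (h : G (l+1)) (i : Fin (n+1))
    (j : Fin (n+m+1)) (h1 : (i : ℕ) ≤ (j : ℕ)) (h2 : (j : ℕ) ≤ (i : ℕ) + m),
    HEq (comp (comp f i g) j h) (comp f i (comp g ⟨(j : ℕ) - (i : ℕ), by omega⟩ h))
  pi_comp : ∀ {n m : ℕ} (f : G (n+1)) (i : Fin (n+1)) (g : G (m+1)),
    ⇑(pi (comp f i g)) = blockComp ⇑(pi f) i ⇑(pi g)
  prod_rule : ∀ {n m : ℕ} (f f' : G (n+1)) (g g' : G (m+1)) (i : Fin (n+1)),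
    comp (f * f') i (g * g') = comp f ((pi f') i) g * comp f' i g'

/-- Transport an element of `G a` along an equality of arities. -/
def ActionOperad.gcast (A : ActionOperad) {a b : ℕ} (h : a = b) (x : A.G a) : A.G b := by
  subst h; exact x

/-- Every action operad gives rise to a cloning system: with `ι_n(g) = e_2 ∘_1 g` and
`κ_j^n(g) = g ∘_j e_2`, the five cloning system axioms hold, where on symmetric groups
`λ_n(σ) = e_2 ∘_1 σ` and `c_j^n(σ) = σ ∘_j e_2` (block insertion of/of a trivial strand). -/
theorem stmt12 (A : ActionOperad) :
    -- (i) π ∘ ι = λ ∘ π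
    (∀ (n : ℕ) (g : A.G (n+1)),
      ⇑(A.pi (A.comp (1 : A.G (1+1)) ⟨0, by omega⟩ g)) =
        blockComp (id : Fin (1+1) → Fin (1+1)) ⟨0, by omega⟩ ⇑(A.pi g)) ∧
    -- (ii) π ∘ κ_j = c_j ∘ π
    (∀ (n : ℕ) (g : A.G (n+1)) (j : Fin (n+1)),
      ⇑(A.pi (A.comp g j (1 : A.G (1+1)))) =
        blockComp ⇑(A.pi g) j (id : Fin (1+1) → Fin (1+1))) ∧
    -- (iii) ι ∘ κ_j = κ_j ∘ ι
    (∀ (n : ℕ) (g : A.G (n+1)) (j : Fin (n+1)),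
      A.comp (1 : A.G (1+1)) ⟨0, by omega⟩ (A.comp g j (1 : A.G (1+1))) =
        A.comp (A.comp (1 : A.G (1+1)) ⟨0, by omega⟩ g)
          ⟨(j : ℕ), by have := j.isLt; omega⟩ (1 : A.G (1+1))) ∧
    -- (iv) κ_l ∘ κ_j = κ_{j+1} ∘ κ_l for l < j
    (∀ (n : ℕ) (g : A.G (n+1)) (l j : Fin (n+1)), (l : ℕ) < (j : ℕ) →
      A.comp (A.comp g j (1 : A.G (1+1))) ⟨(l : ℕ), by have := l.isLt; omega⟩
          (1 : A.G (1+1)) =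
        A.comp (A.comp g l (1 : A.G (1+1))) ⟨(j : ℕ) + 1, by have := j.isLt; omega⟩
          (1 : A.G (1+1))) ∧
    -- (v) κ_j(g·h) = κ_{π(h)(j)}(g) · κ_j(h)
    (∀ (n : ℕ) (g h : A.G (n+1)) (j : Fin (n+1)),
      A.comp (g * h) j (1 : A.G (1+1)) =
        A.comp g ((A.pi h) j) (1 : A.G (1+1)) * A.comp h j (1 : A.G (1+1))) := by
  refine ⟨?_, ?_, ?_, ?_, ?_⟩
  · intro n g
    rw [A.pi_comp, map_one, Equiv.Perm.coe_one]
  · intro n g j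
    rw [A.pi_comp, map_one, Equiv.Perm.coe_one]
  · intro n g j
    have h := A.assoc_nest (1 : A.G (1+1)) g (1 : A.G (1+1)) ⟨0, by omega⟩
      ⟨(j : ℕ), by have := j.isLt; omega⟩ (by simp) (by simp only [Fin.val_mk]; have := j.isLt; omega)
    exact (eq_of_heq h).symm
  · intro n g l j hl
    have h := A.assoc_lt g (1 : A.G (1+1)) (1 : A.G (1+1)) j
      ⟨(l : ℕ), by have := l.isLt; omega⟩ hl
    exact eq_of_heq h
  · intro n g h j
    have := A.prod_rule g h (1 : A.G (1+1)) (1 : A.G (1+1)) j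
    simpa using this
end

section
/- Given a bilateral cloning system, the operations f ∘_i g := κ_i^n(m)(f)·ν_i^m(n)(g) satisfy the action operad product rule: for f, f' ∈ G_n and g, g' ∈ G_m, (f ∘_{π(f')(i)} g)·(f' ∘_i g') = (f·f') ∘_i (g·g'). -/
/-- The underlying data of a (bilateral) cloning system: a family of groups `G_{n+1}`
(`n ≥ 0`), homomorphisms `ι, ζ : G_{n+1} → G_{n+2}`, cloning maps
`κ_j : G_{n+1} → G_{n+2}` and homomorphisms `π : G_{n+1} → Σ_{n+1}`. -/
structure CloningData where
  Gr : ℕ → GrpCat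
  iota : ∀ {n : ℕ}, Gr n →* Gr (n+1)
  zeta : ∀ {n : ℕ}, Gr n →* Gr (n+1)
  kappa : ∀ {n : ℕ}, Fin (n+1) → Gr n → Gr (n+1)
  pi : ∀ {n : ℕ}, Gr n →* Equiv.Perm (Fin (n+1))

/-- Transport along an equality of arities. -/
def CloningData.gcast (C : CloningData) {a b : ℕ} (h : a = b) (x : C.Gr a) : C.Gr b := by
  subst h; exact x

/-- Iterated `ι`: `ι_n(r)`. -/
def CloningData.iotaIter (C : CloningData) {n : ℕ} : (r : ℕ) → C.Gr n → C.Gr (n+r)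
  | 0, g => g
  | r+1, g => C.iota (C.iotaIter r g)

/-- Iterated `ζ`: `ζ_n(r)`. -/
def CloningData.zetaIter (C : CloningData) {n : ℕ} : (r : ℕ) → C.Gr n → C.Gr (n+r)
  | 0, g => g
  | r+1, g => C.zeta (C.zetaIter r g)

/-- Iterated cloning `κ_j^n(s+1)`: `s` applications of `κ` at the position `j`. -/
def CloningData.kappaIter (C : CloningData) {n : ℕ} (j : Fin (n+1)) :
    (s : ℕ) → C.Gr n → C.Gr (n+s)
  | 0, g => g
  | s+1, g => C.kappa (Fin.castLE (Nat.succ_le_succ (Nat.le_add_right n s)) j) (C.kappaIter j s g)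

/-- `ν_j^m(n)`: pad with `a` strands on the left (via `ζ`) and `b` strands on the right
(via `ι`). -/
def CloningData.nuIter (C : CloningData) {m : ℕ} (a b : ℕ) (h : C.Gr m) : C.Gr (m+a+b) :=
  C.iotaIter b (C.zetaIter a h)

/-- A bilateral cloning system (Definitions 2.2 and 2.3 of the paper). -/
structure BilateralCloningSystem extends CloningData where
  iota_inj : ∀ n : ℕ, Function.Injective (iota (n := n))
  zeta_inj : ∀ n : ℕ, Function.Injective (zeta (n := n))
  ax_i : ∀ {n : ℕ} (g : Gr n), ⇑(pi (iota g)) = lamFun ⇑(pi g)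
  ax_ii : ∀ {n : ℕ} (g : Gr n) (j : Fin (n+1)), ⇑(pi (kappa j g)) = cloneFun ⇑(pi g) j
  ax_iii : ∀ {n : ℕ} (g : Gr n) (j : Fin (n+1)),
    iota (kappa j g) = kappa j.castSucc (iota g)
  ax_iv : ∀ {n : ℕ} (g : Gr n) (l j : Fin (n+1)), (l : ℕ) < (j : ℕ) →
    kappa l.castSucc (kappa j g) = kappa j.succ (kappa l g)
  ax_v : ∀ {n : ℕ} (g h : Gr n) (j : Fin (n+1)),
    kappa j (g * h) = kappa ((pi h) j) g * kappa j h
  ax_i' : ∀ {n : ℕ} (g : Gr n), ⇑(pi (zeta g)) = rhoFun ⇑(pi g)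
  ax_iii' : ∀ {n : ℕ} (g : Gr n) (j : Fin (n+1)), zeta (kappa j g) = kappa j.succ (zeta g)
  ax_vi : ∀ {n : ℕ} (g : Gr n), zeta (iota g) = iota (zeta g)
  ax_vii : ∀ {n : ℕ} (g : Gr n), iota (iota g) = kappa (Fin.last (n+1)) (iota g)
  ax_vii' : ∀ {n : ℕ} (g : Gr n), zeta (zeta g) = kappa 0 (zeta g)
  ax_ivplus : ∀ {n : ℕ} (g : Gr n) (j : Fin (n+1)),
    kappa j.succ (kappa j g) = kappa j.castSucc (kappa j g)
  ax_viii : ∀ {n m : ℕ} (g : Gr n) (h : Gr m) (i : Fin (n+1)),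
    toCloningData.kappaIter i m g *
        toCloningData.gcast (by have := i.isLt; omega)
          (toCloningData.nuIter (i : ℕ) (n - (i : ℕ)) h) =
      toCloningData.gcast (by have := ((pi g) i).isLt; omega)
          (toCloningData.nuIter (((pi g) i : Fin (n+1)) : ℕ) (n - (((pi g) i : Fin (n+1)) : ℕ)) h) *
        toCloningData.kappaIter i m g
  ax_ix : ∀ {n m : ℕ} (g : Gr n) (h : Gr m),
    toCloningData.iotaIter (m+1) g *
        toCloningData.gcast (by omega) (toCloningData.zetaIter (n+1) h) =
      toCloningData.gcast (by omega) (toCloningData.zetaIter (n+1) h) *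
        toCloningData.iotaIter (m+1) g

/-- The operation `f ∘_i g := κ_i^n(m)(f) · ν_i^m(n)(g)` built from a bilateral cloning
system. -/
def bcsComp (C : BilateralCloningSystem) {n m : ℕ} (i : Fin (n+1)) (x : C.Gr n)
    (y : C.Gr m) : C.Gr (n+m) :=
  C.toCloningData.kappaIter i m x *
    C.toCloningData.gcast (by have := i.isLt; omega)
      (C.toCloningData.nuIter (i : ℕ) (n - (i : ℕ)) y)

lemma CloningData.gcast_mul (C : CloningData) {a b : ℕ} (h : a = b) (x y : C.Gr a) :
    C.gcast h (x * y) = C.gcast h x * C.gcast h y := by subst h; rfl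

lemma CloningData.iotaIter_mul (C : CloningData) {n : ℕ} (r : ℕ) (x y : C.Gr n) :
    C.iotaIter r (x * y) = C.iotaIter r x * C.iotaIter r y := by
  induction r with
  | zero => rfl
  | succ r ih => simp [CloningData.iotaIter, ih, map_mul]

lemma CloningData.zetaIter_mul (C : CloningData) {n : ℕ} (r : ℕ) (x y : C.Gr n) :
    C.zetaIter r (x * y) = C.zetaIter r x * C.zetaIter r y := by
  induction r with
  | zero => rfl
  | succ r ih => simp [CloningData.zetaIter, ih, map_mul]

lemma CloningData.nuIter_mul (C : CloningData) {m : ℕ} (a b : ℕ) (x y : C.Gr m) :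
    C.nuIter a b (x * y) = C.nuIter a b x * C.nuIter a b y := by
  simp [CloningData.nuIter, C.zetaIter_mul, C.iotaIter_mul]

lemma pi_kappaIter_self (C : BilateralCloningSystem) {n : ℕ} (g : C.Gr n) (i : Fin (n+1))
    (s : ℕ) :
    ((C.pi (C.toCloningData.kappaIter i s g)) (Fin.castLE (by omega) i) : ℕ) =
      ((C.pi g) i : ℕ) := by
  induction s with
  | zero =>
    have : (Fin.castLE (by omega : n + 1 ≤ n + 0 + 1) i) = i := rfl
    rw [this]
    rfl
  | succ s ih =>
    show ((C.pi (C.kappa _ (C.toCloningData.kappaIter i s g)))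
        (Fin.castLE (by omega) i) : ℕ) = _
    rw [C.ax_ii]
    simp only [cloneFun, Fin.coe_castLE]
    rw [dif_pos (le_refl (i : ℕ))]
    have hk : (⟨(i : ℕ), by omega⟩ : Fin (n + s + 1)) =
        Fin.castLE (Nat.succ_le_succ (Nat.le_add_right n s)) i := rfl
    simp only [hk]
    rw [if_pos (le_refl _)]
    exact ih

lemma kappaIter_mul (C : BilateralCloningSystem) {n : ℕ} (f f' : C.Gr n) (i : Fin (n+1))
    (s : ℕ) :
    C.toCloningData.kappaIter i s (f * f') =
      C.toCloningData.kappaIter ((C.pi f') i) s f * C.toCloningData.kappaIter i s f' := by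
  induction s with
  | zero => rfl
  | succ s ih =>
    show C.kappa _ (C.toCloningData.kappaIter i s (f * f')) = _
    rw [ih, C.ax_v]
    congr 1
    · congr 1
      apply Fin.ext
      exact pi_kappaIter_self C f' i s

private lemma regroup {G : Type*} [Group G] (A B Cc B2 D : G) (key : B * Cc = Cc * B2) :
    (A * B) * (Cc * D) = (A * Cc) * (B2 * D) := by
  rw [mul_assoc, ← mul_assoc B, key]; group

/-- The operation `∘_i` built from a bilateral cloning system satisfies the action operad
product rule `(f ∘_{π(f')(i)} g) · (f' ∘_i g') = (f·f') ∘_i (g·g')`. -/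
theorem stmt15 (C : BilateralCloningSystem) {n m : ℕ} (f f' : C.Gr n) (g g' : C.Gr m)
    (i : Fin (n+1)) :
    bcsComp C ((C.pi f') i) f g * bcsComp C i f' g' = bcsComp C i (f * f') (g * g') := by
  unfold bcsComp
  rw [C.toCloningData.nuIter_mul, C.toCloningData.gcast_mul, kappaIter_mul]
  exact regroup _ _ _ _ _ (C.ax_viii f' g i).symm
end

section
/- The block-insertion operation on symmetric groups is associative in the nested case: for σ ∈ Σ_n, τ ∈ Σ_m, ρ ∈ Σ_l and indices 1 ≤ i ≤ n, i ≤ j ≤ i+m−1, one has (σ ∘_i τ) ∘_j ρ = σ ∘_i (τ ∘_{j−i+1} ρ) in Σ_{n+m+l−2}. -/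
/-!
Reading a map `Fin (n+1) → Fin (n+1)` as a map `ℕ → ℕ` (clamped outside its range), block
insertion becomes the piecewise formula `blockCompNat`, and associativity is a case split on
where `k` lies relative to the nested blocks `i ≤ j ≤ j + l ≤ i + m + l`. The one step that is
not index arithmetic: outside the block, the outer insertion compares the value at `k` with
the value `F i + G (j - i)` at `j`, and since `G (j - i) ≤ m` this comparison agrees with that
of `F k` with `F i`, so the shifts by `m` and by `l` add up to the shift by `m + l`.
-/

def blockCompNat (F : ℕ → ℕ) (i m : ℕ) (G : ℕ → ℕ) (k : ℕ) : ℕ :=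
  if k < i then F k + (if F i < F k then m else 0)
  else if k ≤ i + m then F i + G (k - i)
  else F (k - m) + (if F i < F (k - m) then m else 0)

section blockCompNat

variable {F G H : ℕ → ℕ} {i j m l k : ℕ}

theorem blockCompNat_assoc (hG : ∀ a, G a ≤ m) (hij : i ≤ j) (hj : j ≤ i + m) :
    blockCompNat (blockCompNat F i m G) j l H k =
      blockCompNat F i (m + l) (blockCompNat G (j - i) l H) k := by
  rcases show k < i ∨ (i ≤ k ∧ k < j) ∨ (j ≤ k ∧ k ≤ j + l) ∨
      (j + l < k ∧ k ≤ i + m + l) ∨ i + m + l < k by omega with h | h | h | h | h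
  all_goals
    simp (disch := omega) only [blockCompNat, if_pos, if_neg]
    grind

theorem blockCompNat_congr_left {n : ℕ} {F' : ℕ → ℕ} (hF : ∀ a ≤ n, F a = F' a)
    (hi : i ≤ n) (hk : k ≤ n + m) :
    blockCompNat F i m G k = blockCompNat F' i m G k := by
  unfold blockCompNat
  split_ifs <;> simp (disch := omega) only [hF] at * <;> omega

theorem blockCompNat_congr_right {G' : ℕ → ℕ} (hG : ∀ a ≤ m, G a = G' a) :
    blockCompNat F i m G k = blockCompNat F i m G' k := by
  unfold blockCompNat
  split_ifs <;> simp (disch := omega) only [hG]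

end blockCompNat

def natExtend {n : ℕ} (f : Fin (n+1) → Fin (n+1)) (a : ℕ) : ℕ :=
  f (Fin.clamp a n)

section natExtend

variable {n : ℕ} (f : Fin (n+1) → Fin (n+1))

theorem natExtend_of_le {a : ℕ} (ha : a ≤ n) : natExtend f a = f ⟨a, by omega⟩ := by
  simp only [natExtend, Fin.clamp, Nat.min_eq_left ha]

theorem natExtend_val (i : Fin (n+1)) : natExtend f i = f i :=
  natExtend_of_le f (Nat.le_of_lt_succ i.isLt)

theorem natExtend_le (a : ℕ) : natExtend f a ≤ n :=
  Nat.le_of_lt_succ (f _).isLt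

end natExtend

theorem val_blockComp {n m : ℕ} (f : Fin (n+1) → Fin (n+1)) (i : Fin (n+1))
    (g : Fin (m+1) → Fin (m+1)) (k : Fin (n+m+1)) :
    (blockComp f i g k : ℕ) = blockCompNat (natExtend f) i m (natExtend g) k := by
  have := k.isLt
  unfold blockComp blockCompNat
  simp only [natExtend_val]
  split_ifs <;> simp (disch := omega) only [natExtend_of_le, *, ↓reduceIte]

theorem natExtend_blockComp {n m : ℕ} (f : Fin (n+1) → Fin (n+1)) (i : Fin (n+1))
    (g : Fin (m+1) → Fin (m+1)) {a : ℕ} (ha : a ≤ n + m) :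
    natExtend (blockComp f i g) a = blockCompNat (natExtend f) i m (natExtend g) a := by
  rw [natExtend_of_le _ ha, val_blockComp]

/-- Associativity of block insertion on symmetric groups in the nested case:
`(σ ∘_i τ) ∘_j ρ = σ ∘_i (τ ∘_{j−i+1} ρ)` for `i ≤ j ≤ i+m−1` (stated pointwise). -/
theorem stmt19 {n m l : ℕ} (σ : Equiv.Perm (Fin (n+1))) (τ : Equiv.Perm (Fin (m+1)))
    (ρ : Equiv.Perm (Fin (l+1))) (i : Fin (n+1)) (j : ℕ)
    (hij : (i : ℕ) ≤ j) (hj : j ≤ (i : ℕ) + m) (k : ℕ) (hk : k < n+m+l+1) :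
    (blockComp (blockComp ⇑σ i ⇑τ) ⟨j, by have := i.isLt; omega⟩ ⇑ρ ⟨k, by omega⟩ : ℕ) =
      (blockComp ⇑σ i (blockComp ⇑τ ⟨j - (i : ℕ), by omega⟩ ⇑ρ) ⟨k, by omega⟩ : ℕ) := by
  have hi := i.isLt
  rw [val_blockComp, val_blockComp]
  calc blockCompNat (natExtend (blockComp σ i τ)) j l (natExtend ρ) k
      = blockCompNat (blockCompNat (natExtend σ) i m (natExtend τ)) j l (natExtend ρ) k :=
        blockCompNat_congr_left (fun a ha => natExtend_blockComp σ i τ ha) (by omega) (by omega)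
    _ = blockCompNat (natExtend σ) i (m + l)
          (blockCompNat (natExtend τ) (j - i) l (natExtend ρ)) k :=
        blockCompNat_assoc (natExtend_le τ) hij hj
    _ = blockCompNat (natExtend σ) i (m + l)
          (natExtend (blockComp τ ⟨j - i, by omega⟩ ρ)) k :=
        blockCompNat_congr_right fun a ha => (natExtend_blockComp τ ⟨j - i, by omega⟩ ρ ha).symm
end
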